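/- arXiv:0806.0279 — 2 statements merged into one kernel-verified Lean document; each statement's English description precedes it below -/
import Mathlib

section
/- For integers n ≥ 1 and 0 ≤ k ≤ n−1, the number op_{n,≥k} of ordered preference sets of length n with at least k flaws equals the binomial coefficient C(2n−1, n−1−k). -/
/-- The first unoccupied parking space `j` with `p ≤ j ≤ n`, if any. -/
def firstFree (n : ℕ) (occ : Finset ℕ) (p : ℕ) : Option ℕ :=
  (List.range' p (n + 1 - p)).find? (fun j => decide (j ∉ occ))

/-- Number of cars that fail to park, processing the preference list in order,
given the set of already occupied spaces. -/
def flawsFrom (n : ℕ) : List ℕ → Finset ℕ → ℕ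
  | [], _ => 0
  | p :: rest, occ =>
    match firstFree n occ p with
    | none => flawsFrom n rest occ + 1
    | some j => flawsFrom n rest (insert j occ)

/-- The number of flaws (unparked cars) of a preference list of length `n`. -/
def flaws (n : ℕ) (a : List ℕ) : ℕ := flawsFrom n a ∅

/-- A preference set of length `n`: a list of length `n` with entries in `{1, …, n}`. -/
def IsPrefSet (n : ℕ) (a : List ℕ) : Prop :=
  a.length = n ∧ ∀ x ∈ a, 1 ≤ x ∧ x ≤ n

/-- An ordered preference set of length `n`: a nondecreasing preference set. -/
def IsOrderedPrefSet (n : ℕ) (a : List ℕ) : Prop :=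
  IsPrefSet n a ∧ a.Pairwise (· ≤ ·)

/-- `op_{n,≥k}`: number of ordered preference sets of length `n` with at least `k` flaws. -/
noncomputable def opGe (n k : ℕ) : ℕ :=
  {a : List ℕ | IsOrderedPrefSet n a ∧ k ≤ flaws n a}.ncard

/-- `op_{n,≤k}`: number of ordered preference sets of length `n` with at most `k` flaws. -/
noncomputable def opLe (n k : ℕ) : ℕ :=
  {a : List ℕ | IsOrderedPrefSet n a ∧ flaws n a ≤ k}.ncard

/-- `op_{n,k}`: number of ordered preference sets of length `n` with exactly `k` flaws. -/
noncomputable def opEq (n k : ℕ) : ℕ :=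
  {a : List ℕ | IsOrderedPrefSet n a ∧ flaws n a = k}.ncard

/-- `op_{n,≥k,≤l}`: at least `k` flaws, every entry at most `l`. -/
noncomputable def opGeLe (n k l : ℕ) : ℕ :=
  {a : List ℕ | IsOrderedPrefSet n a ∧ k ≤ flaws n a ∧ ∀ x ∈ a, x ≤ l}.ncard

/-- `op_{n,≥k,≤l}^m`: at least `k` flaws, every entry at most `l`, leading term `m`. -/
noncomputable def opGeLeLead (n k l m : ℕ) : ℕ :=
  {a : List ℕ | IsOrderedPrefSet n a ∧ k ≤ flaws n a ∧ (∀ x ∈ a, x ≤ l) ∧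
    a.head? = some m}.ncard

/-- `op_{n,k,≤l}^m`: exactly `k` flaws, every entry at most `l`, leading term `m`. -/
noncomputable def opEqLeLead (n k l m : ℕ) : ℕ :=
  {a : List ℕ | IsOrderedPrefSet n a ∧ flaws n a = k ∧ (∀ x ∈ a, x ≤ l) ∧
    a.head? = some m}.ncard

/-- `op_{n,k}^m`: exactly `k` flaws, leading term `m`. -/
noncomputable def opLead (n k m : ℕ) : ℕ :=
  {a : List ℕ | IsOrderedPrefSet n a ∧ flaws n a = k ∧ a.head? = some m}.ncard

/-- `op_{n,k,=l}^m`: exactly `k` flaws, maximal entry exactly `l`, leading term `m`. -/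
noncomputable def opMaxLead (n k l m : ℕ) : ℕ :=
  {a : List ℕ | IsOrderedPrefSet n a ∧ flaws n a = k ∧ (∀ x ∈ a, x ≤ l) ∧ l ∈ a ∧
    a.head? = some m}.ncard

/-- Binomial coefficient `C(a, b)` with an integer lower index, which is `0`
when `b < 0` (the standard convention). -/
def chooseInt (a : ℕ) (b : ℤ) : ℕ := if 0 ≤ b then a.choose b.toNat else 0

/-!
For a nondecreasing preference list the occupied spaces at or beyond the current preference
always form one block, so there are at least `k` flaws iff `k + i + 1 ≤ a_i` for some (0-based)
index `i`. The map `a ↦ {a_i + i - 1}` is a bijection from ordered preference sets of length `n`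
onto the `n`-subsets of `{0, …, 2n - 2}`; reading a subset as a lattice walk of length `2n - 1`
that steps down at its elements and up elsewhere, the condition says that the walk reaches
height `k`. Reflecting the walk after it first reaches `k` (André's reflection principle) maps
these subsets bijectively onto all `(n - 1 - k)`-subsets.
-/

open Finset

open scoped symmDiff

/-- The last space taken when the cars of `a` park greedily behind an occupied block ending
at `t`, on an unbounded street. -/
def lastSpot : List ℕ → ℕ → ℕ
  | [], t => t
  | p :: a, t => lastSpot a (max p (t + 1))

theorem find?_range'_notMem {occ : Finset ℕ} {t : ℕ} :
    ∀ {p len : ℕ}, (∀ j, p ≤ j → j < p + len → (j ∈ occ ↔ j ≤ t)) →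
      (List.range' p len).find? (fun j => decide (j ∉ occ)) =
        if max p (t + 1) < p + len then some (max p (t + 1)) else none
  | p, 0, _ => by simp
  | p, len + 1, hocc => by
    rw [List.range'_succ, List.find?_cons]
    by_cases hpt : p ≤ t
    · rw [decide_eq_false (not_not.mpr ((hocc p le_rfl (by omega)).mpr hpt)),
        find?_range'_notMem fun j hj hj' => hocc j (by omega) (by omega)]
      grind
    · rw [decide_eq_true (show p ∉ occ from fun hp => hpt ((hocc p le_rfl (by omega)).mp hp))]
      grind

theorem firstFree_eq {n t p : ℕ} {occ : Finset ℕ}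
    (hocc : ∀ j, p ≤ j → j ≤ n → (j ∈ occ ↔ j ≤ t)) :
    firstFree n occ p = if max p (t + 1) ≤ n then some (max p (t + 1)) else none := by
  rw [firstFree, find?_range'_notMem fun j hj hj' => hocc j hj (by omega)]
  grind

theorem self_le_lastSpot (a : List ℕ) (t : ℕ) : t ≤ lastSpot a t := by
  induction a generalizing t with
  | nil => exact le_rfl
  | cons p a ih => exact (Nat.le_succ t).trans ((le_max_right _ _).trans (ih _))

theorem lastSpot_succ {a : List ℕ} {t : ℕ} (ha : ∀ x ∈ a, x ≤ t + 1) :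
    lastSpot a (t + 1) = lastSpot a t + 1 := by
  induction a generalizing t with
  | nil => rfl
  | cons p a ih =>
    have hp := ha p List.mem_cons_self
    rw [lastSpot, lastSpot, max_eq_right (by omega), max_eq_right hp,
      ih fun x hx => (ha x (List.mem_cons_of_mem p hx)).trans (Nat.le_succ _)]

theorem flawsFrom_eq_lastSpot_sub {n c : ℕ} {a : List ℕ} (hsort : a.Pairwise (· ≤ ·))
    (ha : ∀ x ∈ a, c ≤ x ∧ x ≤ n) {occ : Finset ℕ} {t : ℕ}
    (hocc : ∀ j, c ≤ j → j ≤ n → (j ∈ occ ↔ j ≤ t)) (ht : t ≤ n) :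
    flawsFrom n a occ = lastSpot a t - n := by
  induction a generalizing c occ t with
  | nil => simp [flawsFrom, lastSpot, ht]
  | cons p a ih =>
    obtain ⟨hpa, hsort⟩ := List.pairwise_cons.mp hsort
    obtain ⟨hcp, hpn⟩ := ha p List.mem_cons_self
    have ha' : ∀ x ∈ a, p ≤ x ∧ x ≤ n := fun x hx => ⟨hpa x hx, (ha x (by simp [hx])).2⟩
    have hocc' : ∀ j, p ≤ j → j ≤ n → (j ∈ occ ↔ j ≤ t) :=
      fun j hj hjn => hocc j (hcp.trans hj) hjn
    rw [flawsFrom, firstFree_eq hocc', lastSpot]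
    by_cases htn : t < n
    · rw [if_pos (by omega)]
      refine ih hsort ha' (fun j hj hjn => ?_) (by omega)
      rw [Finset.mem_insert, hocc' j hj hjn]
      omega
    · obtain rfl : t = n := by omega
      rw [if_neg (by omega), max_eq_right (by omega)]
      dsimp only
      rw [ih hsort ha' hocc' ht, lastSpot_succ fun x hx => (ha' x hx).2.trans t.le_succ]
      have := self_le_lastSpot a t
      omega

theorem le_lastSpot_iff {m : ℕ} {a : List ℕ} {t : ℕ} :
    m ≤ lastSpot a t ↔
      m ≤ t + a.length ∨ ∃ i, ∃ hi : i < a.length, m + i + 1 ≤ a[i] + a.length := by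
  induction a generalizing t with
  | nil => simp [lastSpot]
  | cons p a ih =>
    rw [lastSpot, ih]
    simp only [List.length_cons]
    constructor
    · rintro (h | ⟨i, hi, h⟩)
      · rcases le_total p (t + 1) with hp | hp
        · exact Or.inl (by omega)
        · exact Or.inr ⟨0, by omega, by rw [List.getElem_cons_zero]; omega⟩
      · exact Or.inr ⟨i + 1, by omega, by rw [List.getElem_cons_succ]; omega⟩
    · rintro (h | ⟨_ | i, hi, h⟩)
      · exact Or.inl (by omega)
      · rw [List.getElem_cons_zero] at h
        exact Or.inl (by omega)
      · rw [List.getElem_cons_succ] at h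
        exact Or.inr ⟨i, by omega, by omega⟩

theorem flaws_eq_lastSpot_sub {n : ℕ} {a : List ℕ} (ha : IsOrderedPrefSet n a) :
    flaws n a = lastSpot a 0 - n :=
  flawsFrom_eq_lastSpot_sub ha.2 ha.1.2 (by simp; omega) (Nat.zero_le n)

theorem le_flaws_iff {n k : ℕ} {a : List ℕ} (ha : IsOrderedPrefSet n a) (hn : 0 < n) :
    k ≤ flaws n a ↔ ∃ i, ∃ hi : i < a.length, k + i + 1 ≤ a[i] := by
  rw [flaws_eq_lastSpot_sub ha]
  obtain ⟨⟨rfl, hbd⟩, -⟩ := ha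
  rcases Nat.eq_zero_or_pos k with rfl | hk
  · exact ⟨fun _ => ⟨0, hn, by simpa using (hbd _ (List.getElem_mem _)).1⟩, fun _ => by omega⟩
  · rw [show k ≤ lastSpot a 0 - a.length ↔ a.length + k ≤ lastSpot a 0 by omega,
      le_lastSpot_iff, or_iff_right (by omega)]
    exact exists_congr fun i => exists_congr fun hi => by omega

/-- The walk that steps down at the elements of `S` and up elsewhere, after `p` steps. -/
def walkHeight (S : Finset ℕ) (p : ℕ) : ℤ := p - 2 * #(S ∩ range p)

theorem walkHeight_zero (S : Finset ℕ) : walkHeight S 0 = 0 := by simp [walkHeight]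

theorem walkHeight_succ (S : Finset ℕ) (p : ℕ) :
    walkHeight S (p + 1) = walkHeight S p + if p ∈ S then -1 else 1 := by
  rw [walkHeight, walkHeight, range_add_one]
  split_ifs with hp
  · rw [inter_insert_of_mem hp, card_insert_of_notMem (by simp)]
    push_cast; ring
  · rw [inter_insert_of_notMem hp]
    push_cast; ring

theorem walkHeight_of_subset_range {S : Finset ℕ} {m : ℕ} (hS : S ⊆ range m) :
    walkHeight S m = m - 2 * #S := by
  rw [walkHeight, inter_eq_left.mpr hS]

theorem walkHeight_congr {S T : Finset ℕ} {p : ℕ} (h : S ∩ range p = T ∩ range p) :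
    walkHeight S p = walkHeight T p := by
  rw [walkHeight, walkHeight, h]

theorem exists_le_walkHeight (k : ℕ) (S : Finset ℕ) : ∃ p, (k : ℤ) ≤ walkHeight S p :=
  ⟨2 * #S + k, by
    have := card_le_card (inter_subset_left (s₁ := S) (s₂ := range (2 * #S + k)))
    rw [walkHeight]; push_cast; omega⟩

def hitTime (k : ℕ) (S : Finset ℕ) : ℕ := Nat.find (exists_le_walkHeight k S)

/-- The walk moves by `±1` and starts at `0`, so it first reaches height `≥ k` exactly at `k`. -/
theorem walkHeight_hitTime (k : ℕ) (S : Finset ℕ) : walkHeight S (hitTime k S) = k := by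
  have hspec : (k : ℤ) ≤ walkHeight S (hitTime k S) := Nat.find_spec (exists_le_walkHeight k S)
  rcases h : hitTime k S with _ | q
  · rw [h, walkHeight_zero] at hspec
    rw [walkHeight_zero]; omega
  · have hmin : ¬ (k : ℤ) ≤ walkHeight S q :=
      Nat.find_min (exists_le_walkHeight k S) (show q < hitTime k S by omega)
    rw [h, walkHeight_succ] at hspec
    rw [walkHeight_succ]
    split_ifs at hspec ⊢ <;> omega

def reflect (k m : ℕ) (S : Finset ℕ) : Finset ℕ := S ∆ Ico (hitTime k S) m

section

variable {k m : ℕ} {S : Finset ℕ}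

theorem hitTime_le_iff :
    hitTime k S ≤ m ↔ ∃ p ≤ m, (k : ℤ) ≤ walkHeight S p :=
  Nat.find_le_iff _ _

theorem hitTime_le {p : ℕ} (h : (k : ℤ) ≤ walkHeight S p) : hitTime k S ≤ p :=
  Nat.find_min' _ h

theorem reflect_inter_range {q : ℕ} (hq : q ≤ hitTime k S) :
    reflect k m S ∩ range q = S ∩ range q := by
  ext x
  by_cases hx : x ∈ S <;> simp [reflect, mem_symmDiff, hx] <;> omega

theorem hitTime_reflect : hitTime k (reflect k m S) = hitTime k S := by
  have hagree : ∀ q ≤ hitTime k S, walkHeight (reflect k m S) q = walkHeight S q :=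
    fun q hq => walkHeight_congr (reflect_inter_range hq)
  refine le_antisymm (hitTime_le ?_) ?_
  · rw [hagree _ le_rfl, walkHeight_hitTime]
  · by_contra! hlt
    have hreach := walkHeight_hitTime k (reflect k m S)
    rw [hagree _ hlt.le] at hreach
    exact hlt.not_ge (hitTime_le hreach.ge)

theorem reflect_reflect : reflect k m (reflect k m S) = S := by
  rw [reflect, hitTime_reflect, reflect, symmDiff_symmDiff_cancel_right]

theorem reflect_subset_range (hS : S ⊆ range m) : reflect k m S ⊆ range m := by
  intro x hx
  have := @hS x
  by_cases hxS : x ∈ S <;> simp_all [reflect, mem_symmDiff]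

theorem card_reflect_add_card (hS : S ⊆ range m) (hm : hitTime k S ≤ m) :
    #(reflect k m S) + #S + k = m := by
  have hk := walkHeight_hitTime k S
  rw [walkHeight] at hk
  set h := hitTime k S
  have hR : reflect k m S \ range h = Ico h m \ S := by
    ext x
    have := @hS x
    by_cases hx : x ∈ S <;> simp_all [reflect, mem_symmDiff] <;> omega
  have hS' : S \ range h = Ico h m ∩ S := by
    ext x
    have := @hS x
    by_cases hx : x ∈ S <;> simp_all
  have hcardR := card_inter_add_card_sdiff (reflect k m S) (range h)
  have hcardS := card_inter_add_card_sdiff S (range h)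
  have hcardI := card_sdiff_add_card_inter (Ico h m) S
  rw [reflect_inter_range (q := h) le_rfl, hR] at hcardR
  rw [hS'] at hcardS
  rw [Nat.card_Ico] at hcardI
  omega

theorem card_filter_hitTime_le {n : ℕ} (hnk : n + k ≤ m) (hm : m ≤ 2 * n + k) :
    #{S ∈ powersetCard n (range m) | hitTime k S ≤ m} = m.choose (m - n - k) := by
  rw [← card_range m, ← card_powersetCard, card_range]
  refine card_nbij' (reflect k m) (reflect k m) ?_ ?_
    (fun S _ => reflect_reflect) (fun T _ => reflect_reflect)
  · intro S hS
    simp only [coe_filter, mem_powersetCard, Set.mem_ofPred_eq, mem_coe] at hS ⊢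
    obtain ⟨⟨hsub, hcard⟩, hhit⟩ := hS
    have := card_reflect_add_card hsub hhit
    exact ⟨reflect_subset_range hsub, by omega⟩
  · intro T hT
    simp only [coe_filter, mem_powersetCard, Set.mem_ofPred_eq, mem_coe] at hT ⊢
    obtain ⟨hsub, hcard⟩ := hT
    have hhit : hitTime k T ≤ m := by
      refine hitTime_le_iff.mpr ⟨m, le_rfl, ?_⟩
      rw [walkHeight_of_subset_range hsub, hcard]
      omega
    have := card_reflect_add_card hsub hhit
    exact ⟨⟨reflect_subset_range hsub, by omega⟩, by rwa [hitTime_reflect]⟩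

theorem exists_mem_le_walkHeight {p : ℕ} (hS : S ⊆ range m) (hend : walkHeight S m < k)
    (hp : (k : ℤ) ≤ walkHeight S p) (hpm : p ≤ m) : ∃ s ∈ S, (k : ℤ) ≤ walkHeight S s := by
  induction h : m - p generalizing p with
  | zero =>
    obtain rfl : p = m := by omega
    omega
  | succ d ih =>
    by_cases hpS : p ∈ S
    · exact ⟨p, hpS, hp⟩
    · exact ih (by rw [walkHeight_succ, if_neg hpS]; omega) (by omega) (by omega)

theorem hitTime_le_iff_exists_mem (hS : S ⊆ range m) (hend : walkHeight S m < k) :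
    hitTime k S ≤ m ↔ ∃ s ∈ S, (k : ℤ) ≤ walkHeight S s := by
  refine ⟨fun h => ?_, fun ⟨s, hs, hk⟩ => (hitTime_le hk).trans (mem_range.mp (hS hs)).le⟩
  obtain ⟨p, hpm, hp⟩ := hitTime_le_iff.mp h
  exact exists_mem_le_walkHeight hS hend hp hpm

end

theorem List.SortedLT.getElem_add_le_getElem_add {l : List ℕ} (hl : l.SortedLT) {i j : ℕ}
    (hij : i ≤ j) (hj : j < l.length) : l[i] + j ≤ l[j] + i := by
  induction j with
  | zero =>
    obtain rfl : i = 0 := by omega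
    rfl
  | succ j ih =>
    rcases hij.eq_or_lt with rfl | hlt
    · rfl
    · have := ih (by omega) (by omega)
      have : l[j] < l[j + 1] := hl.getElem_lt_getElem_iff.mpr j.lt_succ_self
      omega

theorem List.SortedLT.card_toFinset_inter_range_getElem {l : List ℕ} (hl : l.SortedLT) {j : ℕ}
    (hj : j < l.length) : #(l.toFinset ∩ Finset.range l[j]) = j := by
  have hset : l.toFinset ∩ Finset.range l[j] = (l.take j).toFinset := by
    ext x
    simp only [Finset.mem_inter, List.mem_toFinset, Finset.mem_range, List.mem_take_iff_getElem]
    rw [List.mem_iff_getElem]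
    constructor
    · rintro ⟨⟨i, hi, rfl⟩, hlt⟩
      exact ⟨i, Nat.lt_min.mpr ⟨hl.getElem_lt_getElem_iff.mp hlt, hi⟩, rfl⟩
    · rintro ⟨i, hi, rfl⟩
      exact ⟨⟨i, by omega, rfl⟩, hl.getElem_lt_getElem_iff.mpr (by omega)⟩
  rw [hset, List.toFinset_card_of_nodup ((List.take_sublist _ _).nodup hl.nodup),
    List.length_take]
  omega

theorem List.SortedLT.walkHeight_toFinset_getElem {l : List ℕ} (hl : l.SortedLT) {j : ℕ}
    (hj : j < l.length) : walkHeight l.toFinset l[j] = l[j] - 2 * j := by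
  rw [walkHeight, hl.card_toFinset_inter_range_getElem hj]

def stagger (a : List ℕ) : List ℕ := a.mapIdx fun i x => x + i - 1

def unstagger (l : List ℕ) : List ℕ := l.mapIdx fun i x => x + 1 - i

@[simp] theorem length_stagger (a : List ℕ) : (stagger a).length = a.length := List.length_mapIdx

@[simp] theorem length_unstagger (l : List ℕ) : (unstagger l).length = l.length :=
  List.length_mapIdx

theorem sortedLT_stagger {a : List ℕ} (hsort : a.Pairwise (· ≤ ·)) (hpos : ∀ x ∈ a, 1 ≤ x) :
    (stagger a).SortedLT := by
  refine List.sortedLT_of_getElem_lt_getElem_of_lt fun i j hi hj hij => ?_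
  simp only [length_stagger] at hi hj
  have := List.pairwise_iff_getElem.mp hsort i j hi hj hij
  have := hpos _ (List.getElem_mem hi)
  simp only [stagger, List.getElem_mapIdx]
  omega

theorem unstagger_stagger {a : List ℕ} (hpos : ∀ x ∈ a, 1 ≤ x) : unstagger (stagger a) = a := by
  refine List.ext_getElem (by simp) fun i _ hi => ?_
  have := hpos _ (List.getElem_mem hi)
  simp only [unstagger, stagger, List.getElem_mapIdx]
  omega

theorem List.SortedLT.le_getElem {l : List ℕ} (hl : l.SortedLT) {i : ℕ} (hi : i < l.length) :
    i ≤ l[i] := by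
  have := hl.getElem_add_le_getElem_add (Nat.zero_le i) hi
  omega

theorem List.SortedLT.stagger_unstagger {l : List ℕ} (hl : l.SortedLT) :
    stagger (unstagger l) = l := by
  refine List.ext_getElem (by simp) fun i _ hi => ?_
  have := hl.le_getElem hi
  simp only [unstagger, stagger, List.getElem_mapIdx]
  omega

theorem List.SortedLT.pairwise_unstagger {l : List ℕ} (hl : l.SortedLT) :
    (unstagger l).Pairwise (· ≤ ·) := by
  refine List.pairwise_iff_getElem.mpr fun i j hi hj hij => ?_
  simp only [length_unstagger] at hi hj
  have := hl.getElem_add_le_getElem_add hij.le hj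
  simp only [unstagger, List.getElem_mapIdx]
  omega

theorem IsOrderedPrefSet.one_le {n : ℕ} {a : List ℕ} (ha : IsOrderedPrefSet n a) :
    ∀ x ∈ a, 1 ≤ x :=
  fun x hx => (ha.1.2 x hx).1

theorem isOrderedPrefSet_unstagger_sort {n : ℕ} {S : Finset ℕ} (hS : S ⊆ range (2 * n - 1))
    (hcard : #S = n) : IsOrderedPrefSet n (unstagger (S.sort)) := by
  have hl := sortedLT_sort S
  have hlen : (S.sort).length = n := by rw [length_sort, hcard]
  refine ⟨⟨by rw [length_unstagger, hlen], fun x hx => ?_⟩, hl.pairwise_unstagger⟩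
  obtain ⟨i, hi, rfl⟩ := List.mem_iff_getElem.mp hx
  simp only [length_unstagger] at hi
  have hlast : (S.sort)[n - 1] < 2 * n - 1 :=
    mem_range.mp (hS ((mem_sort _).mp (List.getElem_mem _)))
  have := hl.getElem_add_le_getElem_add (i := i) (j := n - 1) (by omega) (by omega)
  have := hl.le_getElem hi
  simp only [unstagger, List.getElem_mapIdx]
  omega

theorem stagger_toFinset_mem_powersetCard {n : ℕ} {a : List ℕ} (ha : IsOrderedPrefSet n a) :
    (stagger a).toFinset ∈ powersetCard n (range (2 * n - 1)) := by
  have hl := sortedLT_stagger ha.2 ha.one_le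
  obtain ⟨⟨hlen, hbd⟩, -⟩ := ha
  refine mem_powersetCard.mpr ⟨fun x hx => ?_, ?_⟩
  · obtain ⟨i, hi, rfl⟩ := List.mem_iff_getElem.mp (List.mem_toFinset.mp hx)
    simp only [length_stagger] at hi
    have := hbd _ (List.getElem_mem hi)
    simp only [stagger, List.getElem_mapIdx, mem_range]
    omega
  · rw [List.toFinset_card_of_nodup hl.nodup, length_stagger, hlen]

theorem le_flaws_iff_hitTime_le {n k : ℕ} {a : List ℕ} (ha : IsOrderedPrefSet n a) (hn : 0 < n) :
    k ≤ flaws n a ↔ hitTime k (stagger a).toFinset ≤ 2 * n - 1 := by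
  obtain ⟨hsub, hcard⟩ := mem_powersetCard.mp (stagger_toFinset_mem_powersetCard ha)
  have hl := sortedLT_stagger ha.2 ha.one_le
  rw [le_flaws_iff ha hn, hitTime_le_iff_exists_mem hsub
    (by rw [walkHeight_of_subset_range hsub, hcard]; omega)]
  simp only [List.mem_toFinset, List.mem_iff_getElem, length_stagger]
  constructor
  · rintro ⟨i, hi, hk⟩
    refine ⟨_, ⟨i, by simpa using hi, rfl⟩, ?_⟩
    rw [hl.walkHeight_toFinset_getElem]
    simp only [stagger, List.getElem_mapIdx]
    omega
  · rintro ⟨_, ⟨i, hi, rfl⟩, hk⟩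
    refine ⟨i, by simpa using hi, ?_⟩
    rw [hl.walkHeight_toFinset_getElem] at hk
    have := ha.one_le _ (List.getElem_mem (by simpa using hi))
    simp only [stagger, List.getElem_mapIdx] at hk
    omega

theorem opGe_eq_card_filter_hitTime_le {n k : ℕ} (hn : 0 < n) :
    opGe n k = #{S ∈ powersetCard n (range (2 * n - 1)) | hitTime k S ≤ 2 * n - 1} := by
  rw [opGe, ← Set.ncard_coe_finset]
  refine Set.ncard_congr (fun a _ => (stagger a).toFinset) ?_ ?_ ?_
  · rintro a ⟨ha, hk⟩
    exact mem_filter.mpr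
      ⟨stagger_toFinset_mem_powersetCard ha, (le_flaws_iff_hitTime_le ha hn).mp hk⟩
  · rintro a b ⟨ha, -⟩ ⟨hb, -⟩ hab
    have : stagger a = stagger b :=
      (sortedLT_stagger ha.2 ha.one_le).eq_of_mem_iff (sortedLT_stagger hb.2 hb.one_le)
        fun x => by rw [← List.mem_toFinset, hab, List.mem_toFinset]
    rw [← unstagger_stagger ha.one_le, this, unstagger_stagger hb.one_le]
  · intro S hS
    obtain ⟨hmem, hhit⟩ := mem_filter.mp hS
    obtain ⟨hsub, hcard⟩ := mem_powersetCard.mp hmem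
    have ha := isOrderedPrefSet_unstagger_sort hsub hcard
    have hS' : (stagger (unstagger S.sort)).toFinset = S := by
      rw [(sortedLT_sort S).stagger_unstagger, sort_toFinset]
    exact ⟨_, ⟨ha, (le_flaws_iff_hitTime_le ha hn).mpr (by rwa [hS'])⟩, hS'⟩

theorem stmt1 (n k : ℕ) (hn : 1 ≤ n) (hk : k ≤ n - 1) :
    opGe n k = Nat.choose (2 * n - 1) (n - 1 - k) := by
  rw [opGe_eq_card_filter_hitTime_le hn, card_filter_hitTime_le (by omega) (by omega)]
  congr 1
  omega
end

section
/- For integers 1 ≤ m ≤ k and n ≥ l ≥ k+1, the number op_{n,k,≤l}^m of ordered preference sets (a_1,…,a_n) of length n with exactly k flaws, leading term a_1 = m, and a_i ≤ l for all i, satisfies (n−m+k+2) · op_{n,k,≤l}^m = (n−l+2k−m+4) · C(n+l−m−1, l−k−2). -/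
/-!
A nondecreasing preference list parks greedily: each car takes `max aᵢ q`, where `q` is one past
the previous car's space, and fails once that exceeds `n`. Comparing, for every threshold `p`, the
`#{i | p ≤ aᵢ}` cars that want a space `≥ p` with the `n + 1 - p` such spaces shows that the number
of flaws is `max_p (#{i | p ≤ aᵢ} + p) - (n + 1)`. So "at least `k` flaws" is a ballot-type
condition, and the lists that avoid it are counted by splitting off a last entry equal to `l`,
which turns the count into Pascal's recurrence: `op_{n,≥k,≤l}^m = C(n+l-m-1, l-k-2)`. Then
`op_{n,k,≤l}^m = C(N, r) - C(N, r-1)` with `N = n+l-m-1`, `r = l-k-2`, and the theorem is the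
identity `(N + 1 - r) C(N, r-1) = r C(N, r)`.
-/

lemma firstFree_eq_some {n p j : ℕ} {occ : Finset ℕ} (hpj : p ≤ j) (hjn : j ≤ n) (hj : j ∉ occ)
    (hocc : ∀ i, p ≤ i → i < j → i ∈ occ) : firstFree n occ p = some j :=
  List.find?_range'_eq_some.2
    ⟨by simpa using hj, List.mem_range'_1.2 ⟨hpj, by omega⟩,
      fun i h₁ h₂ => by simpa using hocc i h₁ h₂⟩

lemma firstFree_eq_none {n p : ℕ} {occ : Finset ℕ} (hocc : ∀ j, p ≤ j → j ≤ n → j ∈ occ) :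
    firstFree n occ p = none :=
  List.find?_range'_eq_none.2 fun j h₁ h₂ => by simpa using hocc j h₁ (by omega)

/-- Flaws of a nondecreasing list when, among the spaces at or above its first entry, exactly those
below `q` are occupied: each car then parks at `max x q`. -/
def sortedFlaws (n : ℕ) : ℕ → List ℕ → ℕ
  | _, [] => 0
  | q, x :: t => if max x q ≤ n then sortedFlaws n (max x q + 1) t else sortedFlaws n q t + 1

theorem flawsFrom_eq_sortedFlaws {n lo q : ℕ} {a : List ℕ} {occ : Finset ℕ}
    (hs : a.Pairwise (· ≤ ·)) (hb : ∀ x ∈ a, lo ≤ x ∧ x ≤ n)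
    (hfree : ∀ j, q ≤ j → j ∉ occ) (htaken : ∀ j, lo ≤ j → j < q → j ∈ occ) :
    flawsFrom n a occ = sortedFlaws n q a := by
  induction a generalizing occ q lo with
  | nil => rfl
  | cons x t ih =>
    obtain ⟨hxt, hts⟩ := List.pairwise_cons.1 hs
    have hx := hb x List.mem_cons_self
    have htb : ∀ y ∈ t, x ≤ y ∧ y ≤ n :=
      fun y hy => ⟨hxt y hy, (hb y (List.mem_cons_of_mem x hy)).2⟩
    by_cases hc : max x q ≤ n
    · have hpark : firstFree n occ x = some (max x q) :=
        firstFree_eq_some (le_max_left _ _) hc (hfree _ (le_max_right _ _))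
          fun i h₁ h₂ => htaken i (hx.1.trans h₁) (by omega)
      simp only [flawsFrom, sortedFlaws, hpark, if_pos hc]
      refine ih hts htb (fun j hj => ?_) (fun j hj₁ hj₂ => ?_)
      · simp only [Finset.mem_insert, not_or]
        exact ⟨by omega, hfree j (by omega)⟩
      · rcases eq_or_ne j (max x q) with h | h
        · exact Finset.mem_insert.2 (Or.inl h)
        · exact Finset.mem_insert_of_mem (htaken j (hx.1.trans hj₁) (by omega))
    · have hfail : firstFree n occ x = none :=
        firstFree_eq_none fun j h₁ h₂ => htaken j (hx.1.trans h₁) (by omega)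
      simp only [flawsFrom, sortedFlaws, hfail, if_neg hc]
      rw [ih hts htb hfree fun j h₁ h₂ => htaken j (hx.1.trans h₁) h₂]

theorem flaws_eq_sortedFlaws {n : ℕ} {a : List ℕ} (hs : a.Pairwise (· ≤ ·))
    (hb : ∀ x ∈ a, 1 ≤ x ∧ x ≤ n) : flaws n a = sortedFlaws n 1 a :=
  flawsFrom_eq_sortedFlaws hs hb (fun _ _ => Finset.notMem_empty _) (by omega)

def countGe (p : ℕ) (a : List ℕ) : ℕ := a.countP (p ≤ ·)

lemma countGe_cons (p x : ℕ) (t : List ℕ) :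
    countGe p (x :: t) = countGe p t + if p ≤ x then 1 else 0 := by
  simp [countGe, List.countP_cons]

lemma countGe_le_length (p : ℕ) (a : List ℕ) : countGe p a ≤ a.length :=
  List.countP_le_length

lemma countGe_eq_length {p : ℕ} {a : List ℕ} (h : ∀ x ∈ a, p ≤ x) : countGe p a = a.length :=
  List.countP_eq_length.2 fun x hx => decide_eq_true (h x hx)

lemma countGe_eq_zero {p : ℕ} {a : List ℕ} (h : ∀ x ∈ a, x < p) : countGe p a = 0 :=
  List.countP_eq_zero.2 fun x hx => by simpa using h x hx

lemma countGe_append_singleton (p x : ℕ) (a : List ℕ) :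
    countGe p (a ++ [x]) = countGe p a + if p ≤ x then 1 else 0 := by
  simp [countGe, List.countP_append]

theorem countGe_add_max_le_sortedFlaws {n p q : ℕ} {a : List ℕ} (hs : a.Pairwise (· ≤ ·))
    (hb : ∀ x ∈ a, x ≤ n) (hp : p ≤ n + 1) (hq : q ≤ n + 1) :
    countGe p a + max p q ≤ sortedFlaws n q a + (n + 1) := by
  induction a generalizing p q with
  | nil => simp only [countGe, List.countP_nil, sortedFlaws]; omega
  | cons x t ih =>
    obtain ⟨hxt, hts⟩ := List.pairwise_cons.1 hs
    have hx := hb x List.mem_cons_self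
    have htb : ∀ y ∈ t, y ≤ n := fun y hy => hb y (List.mem_cons_of_mem x hy)
    rw [countGe_cons, sortedFlaws]
    by_cases hc : max x q ≤ n
    · rw [if_pos hc]
      by_cases hpx : p ≤ x
      · -- every car of `t` wants a space `≥ x ≥ p`, so compare with the threshold `x`
        have := ih hts htb (p := x) (q := max x q + 1) (by omega) (by omega)
        rw [countGe_eq_length hxt] at this
        have := countGe_le_length p t
        rw [if_pos hpx]
        omega
      · have := ih hts htb (p := p) (q := max x q + 1) hp (by omega)
        rw [if_neg hpx]
        omega
    · have := ih hts htb hp hq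
      rw [if_neg hc]
      split_ifs <;> omega

theorem exists_sortedFlaws_le_countGe_add_max {n q : ℕ} {a : List ℕ} (hs : a.Pairwise (· ≤ ·))
    (hb : ∀ x ∈ a, 1 ≤ x ∧ x ≤ n) :
    ∃ p, 1 ≤ p ∧ p ≤ n + 1 ∧ sortedFlaws n q a + (n + 1) ≤ countGe p a + max p q := by
  induction a generalizing q with
  | nil => exact ⟨n + 1, by omega, le_rfl, by simp [sortedFlaws, countGe]⟩
  | cons x t ih =>
    obtain ⟨hxt, hts⟩ := List.pairwise_cons.1 hs
    have hx := hb x List.mem_cons_self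
    have htb : ∀ y ∈ t, 1 ≤ y ∧ y ≤ n := fun y hy => hb y (List.mem_cons_of_mem x hy)
    have hxx : countGe x (x :: t) = t.length + 1 := by
      rw [countGe_cons, countGe_eq_length hxt, if_pos le_rfl]
    rw [sortedFlaws]
    split_ifs with hc
    · obtain ⟨p, hp₁, hpn, hle⟩ := ih hts htb (q := max x q + 1)
      by_cases hpq : p ≤ max x q + 1
      · have := countGe_le_length p t
        exact ⟨x, hx.1, by omega, by omega⟩
      · refine ⟨p, hp₁, hpn, ?_⟩
        rw [countGe_cons, if_neg (by omega)]
        omega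
    · obtain ⟨p, -, hpn, hle⟩ := ih hts htb (q := q)
      have := countGe_le_length p t
      exact ⟨x, hx.1, by omega, by omega⟩

theorem le_flaws_iff_s9 {n k l : ℕ} {a : List ℕ} (hk : 1 ≤ k) (hln : l ≤ n)
    (hs : a.Pairwise (· ≤ ·)) (hb : ∀ x ∈ a, 1 ≤ x ∧ x ≤ l) :
    k ≤ flaws n a ↔ ∃ p, 1 ≤ p ∧ p ≤ l ∧ n + k + 1 ≤ countGe p a + p := by
  have hbn : ∀ x ∈ a, 1 ≤ x ∧ x ≤ n := fun x hx => ⟨(hb x hx).1, (hb x hx).2.trans hln⟩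
  rw [flaws_eq_sortedFlaws hs hbn]
  constructor
  · intro hflaws
    obtain ⟨p, hp₁, hpn, hle⟩ := exists_sortedFlaws_le_countGe_add_max (q := 1) hs hbn
    rw [max_eq_left hp₁] at hle
    refine ⟨p, hp₁, ?_, by omega⟩
    by_contra! hlp
    have := countGe_eq_zero fun x hx => lt_of_le_of_lt (hb x hx).2 hlp
    omega
  · rintro ⟨p, hp₁, hpl, hcount⟩
    have := countGe_add_max_le_sortedFlaws (q := 1) hs (fun x hx => (hbn x hx).2)
      (p := p) (by omega) (by omega)
    rw [max_eq_left hp₁] at this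
    omega

def sortedLists (n l m : ℕ) : Set (List ℕ) :=
  {a | a.length = n ∧ a.Pairwise (· ≤ ·) ∧ (∀ x ∈ a, 1 ≤ x ∧ x ≤ l) ∧ a.head? = some m}

/-- By `le_flaws_iff`, for `1 ≤ k` and `l ≤ n` these are the members of `sortedLists n l m` with
fewer than `k` flaws. -/
def balancedLists (n k l m : ℕ) : Set (List ℕ) :=
  {a ∈ sortedLists n l m | ∀ p, 1 ≤ p → p ≤ l → countGe p a + p ≤ n + k}

lemma sortedLists_finite (n l m : ℕ) : (sortedLists n l m).Finite := by
  refine ((List.finite_length_eq (Fin (l + 1)) n).image (List.map Fin.val)).subset ?_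
  rintro a ⟨hlen, -, hb, -⟩
  refine ⟨a.pmap (fun x hx => (⟨x, hx⟩ : Fin (l + 1))) fun x hx => Nat.lt_succ_of_le (hb x hx).2,
    by simpa using hlen, ?_⟩
  simp [List.map_pmap]

lemma balancedLists_subset_sortedLists (n k l m : ℕ) :
    balancedLists n k l m ⊆ sortedLists n l m :=
  Set.sep_subset _ _

lemma balancedLists_finite (n k l m : ℕ) : (balancedLists n k l m).Finite :=
  (sortedLists_finite n l m).subset (balancedLists_subset_sortedLists n k l m)

lemma exists_eq_cons_of_mem_sortedLists {n l m : ℕ} {a : List ℕ} (ha : a ∈ sortedLists n l m) :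
    ∃ t, a = m :: t ∧ t.length + 1 = n := by
  obtain ⟨hlen, -, -, hhead⟩ := ha
  obtain ⟨t, rfl⟩ := List.head?_eq_some_iff.1 hhead
  exact ⟨t, rfl, hlen⟩

lemma balancedLists_eq_sortedLists {n k l m : ℕ} (hmk : m ≤ k) (hl : l ≤ k + 1) :
    balancedLists n k l m = sortedLists n l m := by
  refine Set.sep_eq_self_iff_mem_true.2 fun a ha p _ hpl => ?_
  obtain ⟨t, rfl, hlen⟩ := exists_eq_cons_of_mem_sortedLists ha
  have := countGe_le_length p t
  rw [countGe_cons]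
  split_ifs <;> omega

lemma balancedLists_top (n k m : ℕ) : balancedLists n k (n + k + 1) m = ∅ :=
  Set.eq_empty_of_forall_notMem fun _ ha => by
    have := ha.2 (n + k + 1) (by omega) le_rfl
    omega

lemma sortedLists_one {l m : ℕ} (hm : 1 ≤ m) (hml : m ≤ l) : sortedLists 1 l m = {[m]} := by
  ext a
  refine ⟨fun ha => ?_, ?_⟩
  · obtain ⟨t, rfl, hlen⟩ := exists_eq_cons_of_mem_sortedLists ha
    simp_all [List.length_eq_zero_iff]
  · rintro rfl
    exact ⟨rfl, List.pairwise_singleton _ _, by simp [hm, hml], rfl⟩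

lemma sortedLists_self {n m : ℕ} (hn : 1 ≤ n) (hm : 1 ≤ m) :
    sortedLists n m m = {List.replicate n m} := by
  ext a
  refine ⟨fun ha => ?_, ?_⟩
  · obtain ⟨t, rfl, hlen⟩ := exists_eq_cons_of_mem_sortedLists ha
    obtain ⟨-, hs, hb, -⟩ := ha
    rw [Set.mem_singleton_iff, List.eq_replicate_iff]
    refine ⟨hlen, fun x hx => le_antisymm (hb x hx).2 ?_⟩
    rcases List.mem_cons.1 hx with rfl | hx
    · exact le_rfl
    · exact List.rel_of_pairwise_cons hs hx
  · rintro rfl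
    obtain ⟨n, rfl⟩ : ∃ n', n = n' + 1 := ⟨n - 1, by omega⟩
    refine ⟨List.length_replicate, List.pairwise_replicate.2 (Or.inr le_rfl), ?_, rfl⟩
    intro x hx
    rw [List.eq_of_mem_replicate hx]
    exact ⟨hm, le_rfl⟩

lemma balancedLists_pred_eq {n k l m : ℕ} (hl : l ≤ n + k) :
    balancedLists n k (l - 1) m = balancedLists n k l m \ {a | l ∈ a} := by
  ext a
  simp only [balancedLists, sortedLists, Set.mem_sdiff, Set.mem_ofPred_eq]
  constructor
  · rintro ⟨⟨hlen, hs, hb, hhead⟩, hbal⟩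
    refine ⟨⟨⟨hlen, hs, fun x hx => ⟨(hb x hx).1, by have := (hb x hx).2; omega⟩, hhead⟩,
      fun p hp₁ hpl => ?_⟩, fun hla => by have := (hb l hla).2; have := (hb l hla).1; omega⟩
    rcases (by omega : p ≤ l - 1 ∨ p = l) with hpl | rfl
    · exact hbal p hp₁ hpl
    · have := countGe_eq_zero (p := p) (a := a) fun x hx => by have := (hb x hx).2; omega
      omega
  · rintro ⟨⟨⟨hlen, hs, hb, hhead⟩, hbal⟩, hla⟩
    refine ⟨⟨hlen, hs, fun x hx => ⟨(hb x hx).1, ?_⟩, hhead⟩,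
      fun p hp₁ hpl => hbal p hp₁ (by omega)⟩
    have : x ≠ l := fun h => hla (h ▸ hx)
    have := (hb x hx).2
    omega

lemma eq_dropLast_append_of_mem {l : ℕ} {a : List ℕ} (hs : a.Pairwise (· ≤ ·))
    (hb : ∀ x ∈ a, x ≤ l) (hla : l ∈ a) : a = a.dropLast ++ [l] := by
  have hne := List.ne_nil_of_mem hla
  have hlast : a.getLast hne = l := le_antisymm (hb _ (List.getLast_mem hne)) (hs.rel_getLast hla)
  conv_lhs => rw [← List.dropLast_concat_getLast hne, hlast]

lemma image_append_balancedLists {n k l m : ℕ} (hn : 1 ≤ n) (hl : 1 ≤ l) :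
    (· ++ [l]) '' balancedLists n k l m = balancedLists (n + 1) k l m ∩ {a | l ∈ a} := by
  ext a
  simp only [balancedLists, sortedLists, Set.mem_image, Set.mem_inter_iff, Set.mem_ofPred_eq]
  constructor
  · rintro ⟨b, ⟨⟨hlen, hs, hb, hhead⟩, hbal⟩, rfl⟩
    refine ⟨⟨⟨by simp [hlen], ?_, ?_, ?_⟩, fun p hp₁ hpl => ?_⟩, by simp⟩
    · exact List.pairwise_append.2 ⟨hs, List.pairwise_singleton _ _,
        fun x hx y hy => (List.mem_singleton.1 hy) ▸ (hb x hx).2⟩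
    · intro x hx
      rcases List.mem_append.1 hx with hx | hx
      · exact hb x hx
      · rw [List.mem_singleton.1 hx]
        exact ⟨hl, le_rfl⟩
    · rw [List.head?_append, hhead]
      rfl
    · have := hbal p hp₁ hpl
      rw [countGe_append_singleton, if_pos hpl]
      omega
  · rintro ⟨⟨⟨hlen, hs, hb, hhead⟩, hbal⟩, hla⟩
    have hsplit := eq_dropLast_append_of_mem hs (fun x hx => (hb x hx).2) hla
    refine ⟨a.dropLast, ⟨⟨by simp [hlen], hs.sublist (List.dropLast_sublist a),
      fun x hx => hb x (List.dropLast_subset a hx), ?_⟩, fun p hp₁ hpl => ?_⟩, hsplit.symm⟩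
    · rw [List.head?_dropLast, if_pos (by omega), hhead]
    · have := hbal p hp₁ hpl
      rw [hsplit, countGe_append_singleton, if_pos hpl] at this
      omega

lemma ncard_balancedLists_succ {n k l m : ℕ} (hn : 1 ≤ n) (hl₁ : 1 ≤ l) (hl : l ≤ n + 1 + k) :
    (balancedLists (n + 1) k l m).ncard
      = (balancedLists (n + 1) k (l - 1) m).ncard + (balancedLists n k l m).ncard := by
  rw [balancedLists_pred_eq hl,
    ← Set.ncard_image_of_injective (balancedLists n k l m) (List.append_left_injective [l]),
    image_append_balancedLists hn hl₁]
  exact (Set.ncard_inter_add_ncard_sdiff_eq_ncard _ _ (balancedLists_finite _ _ _ _)).symm.trans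
    (add_comm _ _)

lemma chooseInt_of_neg (a : ℕ) {b : ℤ} (hb : b < 0) : chooseInt a b = 0 :=
  if_neg (by omega)

lemma chooseInt_natCast (a b : ℕ) : chooseInt a b = a.choose b := by
  simp [chooseInt]

lemma chooseInt_succ (a : ℕ) (b : ℤ) :
    chooseInt (a + 1) b = chooseInt a (b - 1) + chooseInt a b := by
  rcases lt_trichotomy b 0 with hb | rfl | hb
  · rw [chooseInt_of_neg _ hb, chooseInt_of_neg _ (by omega), chooseInt_of_neg _ hb]
  · norm_num [chooseInt]
  · obtain ⟨c, rfl⟩ : ∃ c : ℕ, b = (c + 1 : ℕ) := ⟨(b - 1).toNat, by omega⟩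
    rw [show ((c + 1 : ℕ) : ℤ) - 1 = c by push_cast; ring, chooseInt_natCast, chooseInt_natCast,
      chooseInt_natCast, Nat.choose_succ_succ']

lemma chooseInt_sub_one_mul (a : ℕ) (b : ℤ) :
    (chooseInt a (b - 1) : ℤ) * (a + 1 - b) = chooseInt a b * b := by
  rcases (by omega : b < 0 ∨ b = 0 ∨ 1 ≤ b) with hb | rfl | hb
  · simp [chooseInt_of_neg _ hb, chooseInt_of_neg _ (by omega : b - 1 < 0)]
  · simp [chooseInt_of_neg _ (by omega : (-1 : ℤ) < 0)]
  · obtain ⟨c, rfl⟩ : ∃ c : ℕ, b = (c + 1 : ℕ) := ⟨(b - 1).toNat, by omega⟩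
    rw [show ((c + 1 : ℕ) : ℤ) - 1 = c by push_cast; ring, chooseInt_natCast, chooseInt_natCast]
    rcases le_or_gt c a with hca | hac
    · have := Nat.choose_succ_right_eq a c
      zify [hca] at this
      push_cast
      linear_combination -this
    · simp [Nat.choose_eq_zero_of_lt hac, Nat.choose_eq_zero_of_lt (by omega : a < c + 1)]

theorem ncard_balancedLists_add_chooseInt {n k l m : ℕ} (hn : 1 ≤ n) (hm : 1 ≤ m) (hmk : m ≤ k)
    (hml : m ≤ l) (hl : l ≤ n + k + 1) :
    (balancedLists n k l m).ncard + chooseInt (n + l - m - 1) ((l : ℤ) - k - 2)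
      = (n + l - m - 1).choose (n - 1) := by
  rcases hl.eq_or_lt with rfl | hl
  · rw [balancedLists_top, Set.ncard_empty, zero_add,
      show ((n + k + 1 : ℕ) : ℤ) - k - 2 = (n - 1 : ℕ) by omega, chooseInt_natCast]
  by_cases hbase : n = 1 ∨ l = m
  · rw [balancedLists_eq_sortedLists hmk (by omega), chooseInt_of_neg _ (by omega), add_zero]
    rcases hbase with rfl | rfl
    · rw [sortedLists_one hm hml, Set.ncard_singleton, Nat.choose_zero_right]
    · rw [sortedLists_self hn hm, Set.ncard_singleton, show n + l - l - 1 = n - 1 by omega,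
        Nat.choose_self]
  -- split off a last entry `l`: both sides then obey Pascal's rule
  have ih₁ := ncard_balancedLists_add_chooseInt (n := n) (l := l - 1) hn hm hmk (by omega)
    (by omega)
  have ih₂ := ncard_balancedLists_add_chooseInt (n := n - 1) (l := l) (by omega) hm hmk hml
    (by omega)
  rw [show n + (l - 1) - m - 1 = n + l - m - 2 by omega,
    show ((l - 1 : ℕ) : ℤ) - k - 2 = (l : ℤ) - k - 2 - 1 by omega] at ih₁
  rw [show n - 1 + l - m - 1 = n + l - m - 2 by omega, show n - 1 - 1 = n - 2 by omega] at ih₂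
  have hcount := ncard_balancedLists_succ (n := n - 1) (k := k) (l := l) (m := m) (by omega)
    (by omega) (by omega)
  rw [Nat.sub_add_cancel hn] at hcount
  have hpascal := Nat.choose_succ_succ' (n + l - m - 2) (n - 2)
  have hpascalInt := chooseInt_succ (n + l - m - 2) ((l : ℤ) - k - 2)
  rw [show n + l - m - 2 + 1 = n + l - m - 1 by omega] at hpascal hpascalInt
  rw [show n - 2 + 1 = n - 1 by omega] at hpascal
  omega
termination_by n + l

lemma ncard_sortedLists {n l m : ℕ} (hn : 1 ≤ n) (hm : 1 ≤ m) (hml : m ≤ l) :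
    (sortedLists n l m).ncard = (n + l - m - 1).choose (n - 1) := by
  have := ncard_balancedLists_add_chooseInt (k := l) hn hm hml hml (by omega)
  rwa [balancedLists_eq_sortedLists hml (by omega), chooseInt_of_neg _ (by omega), add_zero] at this

lemma setOf_le_flaws_eq_sortedLists_sdiff_balancedLists {n k l m : ℕ} (hk : 1 ≤ k) (hln : l ≤ n) :
    {a : List ℕ | IsOrderedPrefSet n a ∧ k ≤ flaws n a ∧ (∀ x ∈ a, x ≤ l) ∧ a.head? = some m}
      = sortedLists n l m \ balancedLists n k l m := by
  ext a
  simp only [IsOrderedPrefSet, IsPrefSet, balancedLists, sortedLists, Set.mem_sdiff,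
    Set.mem_ofPred_eq]
  constructor
  · rintro ⟨⟨⟨hlen, hb⟩, hs⟩, hflaws, hbl, hhead⟩
    have hb' : ∀ x ∈ a, 1 ≤ x ∧ x ≤ l := fun x hx => ⟨(hb x hx).1, hbl x hx⟩
    obtain ⟨p, hp₁, hpl, hp⟩ := (le_flaws_iff_s9 hk hln hs hb').1 hflaws
    exact ⟨⟨hlen, hs, hb', hhead⟩, fun ⟨_, hbal⟩ => by have := hbal p hp₁ hpl; omega⟩
  · rintro ⟨⟨hlen, hs, hb, hhead⟩, hnot⟩
    refine ⟨⟨⟨hlen, fun x hx => ⟨(hb x hx).1, (hb x hx).2.trans hln⟩⟩, hs⟩,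
      (le_flaws_iff_s9 hk hln hs hb).2 ?_, fun x hx => (hb x hx).2, hhead⟩
    by_contra! hbal
    exact hnot ⟨⟨hlen, hs, hb, hhead⟩, fun p hp₁ hpl => by have := hbal p hp₁ hpl; omega⟩

theorem opGeLeLead_eq_chooseInt {n k l m : ℕ} (hm : 1 ≤ m) (hmk : m ≤ k) (hml : m ≤ l)
    (hln : l ≤ n) : opGeLeLead n k l m = chooseInt (n + l - m - 1) ((l : ℤ) - k - 2) := by
  have hbal := ncard_balancedLists_add_chooseInt (n := n) (by omega) hm hmk hml (by omega)
  have hsplit := Set.ncard_sdiff_add_ncard_of_subset (balancedLists_subset_sortedLists n k l m)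
    (sortedLists_finite n l m)
  rw [ncard_sortedLists (by omega) hm hml] at hsplit
  rw [opGeLeLead, setOf_le_flaws_eq_sortedLists_sdiff_balancedLists (by omega) hln]
  omega

theorem opEqLeLead_add_opGeLeLead_succ (n k l m : ℕ) :
    opEqLeLead n k l m + opGeLeLead n (k + 1) l m = opGeLeLead n k l m := by
  have hsub : {a : List ℕ | IsOrderedPrefSet n a ∧ k + 1 ≤ flaws n a ∧ (∀ x ∈ a, x ≤ l) ∧
      a.head? = some m} ⊆ {a : List ℕ | IsOrderedPrefSet n a ∧ k ≤ flaws n a ∧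
      (∀ x ∈ a, x ≤ l) ∧ a.head? = some m} :=
    fun a ⟨h₁, h₂, h₃, h₄⟩ => ⟨h₁, by omega, h₃, h₄⟩
  have hfin : {a : List ℕ | IsOrderedPrefSet n a ∧ k ≤ flaws n a ∧ (∀ x ∈ a, x ≤ l) ∧
      a.head? = some m}.Finite :=
    (sortedLists_finite n l m).subset fun a ⟨⟨⟨hlen, hb⟩, hs⟩, _, hbl, hhead⟩ =>
      ⟨hlen, hs, fun x hx => ⟨(hb x hx).1, hbl x hx⟩, hhead⟩
  rw [opEqLeLead, opGeLeLead, opGeLeLead, ← Set.ncard_sdiff_add_ncard_of_subset hsub hfin]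
  congr 2
  ext a
  simp only [Set.mem_sdiff, Set.mem_ofPred_eq]
  grind

theorem stmt9 (n k l m : ℕ) (hm : 1 ≤ m) (hmk : m ≤ k) (hl : k + 1 ≤ l) (hn : l ≤ n) :
    (n - m + k + 2) * opEqLeLead n k l m
      = (n - l + 2 * k - m + 4) * chooseInt (n + l - m - 1) ((l : ℤ) - k - 2) := by
  have hsplit := opEqLeLead_add_opGeLeLead_succ n k l m
  rw [opGeLeLead_eq_chooseInt hm hmk (by omega) hn,
    opGeLeLead_eq_chooseInt hm (by omega) (by omega) hn,
    show ((l : ℤ) - (k + 1 : ℕ) - 2) = (l : ℤ) - k - 2 - 1 by push_cast; ring] at hsplit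
  have hchoose := chooseInt_sub_one_mul (n + l - m - 1) ((l : ℤ) - k - 2)
  zify [show m ≤ n by omega, hn, show m ≤ n - l + 2 * k by omega,
    show 1 ≤ n + l - m by omega] at hsplit hchoose ⊢
  push_cast [show m ≤ n + l by omega] at hchoose ⊢
  linear_combination (n - m + k + 2 : ℤ) * hsplit - hchoose
end
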